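/- The matrices { (N_T N_R N_t)^{−1/2} X_Θ : Θ ∈ G } form an orthonormal system with respect to the Frobenius inner product: for all Θ, Θ' ∈ G, ⟨X_{Θ'}, X_Θ⟩ = Tr(X_{Θ'}^* X_Θ) = N_T·N_R·N_t if Θ' = Θ, and 0 otherwise. -/

import Mathlib

/-!
`X_Θ` is the Kronecker product of the rank-one angle matrix `u_β v_βᵀ` (both factors
vectors of phases) with the delay–Doppler matrix `M_f T_τ`, so `Tr(X_{Θ'}ᴴ X_Θ)` splits as
a product of two traces. The angle trace is
`(∑_i e^{2πi Δβ i/N_R})(∑_j e^{2πi Δβ j/(N_T N_R)})`, which the mixed-radix index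
`k = j + N_T i` merges into one sum of `N_T N_R`-th roots of unity; the delay–Doppler trace
vanishes unless `τ = τ'` and is otherwise a sum of `N_t`-th roots of unity. Both sums are
geometric and vanish unless the frequency difference is zero.
-/

open MeasureTheory ProbabilityTheory Complex
open scoped ENNReal Matrix

noncomputable section

namespace MIMO

/-- Squared ℓ²-norm of a complex vector. -/
def l2normSq {ι : Type*} [Fintype ι] (x : ι → ℂ) : ℝ := ∑ i, ‖x i‖ ^ 2

/-- ℓ²-norm of a complex vector. -/
def l2norm {ι : Type*} [Fintype ι] (x : ι → ℂ) : ℝ := Real.sqrt (l2normSq x)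

/-- ℓ¹-norm of a complex vector. -/
def l1norm {ι : Type*} [Fintype ι] (x : ι → ℂ) : ℝ := ∑ i, ‖x i‖

/-- Hermitian inner product, conjugate-linear in the first argument. -/
def cInner {ι : Type*} [Fintype ι] (x y : ι → ℂ) : ℂ := ∑ i, (starRingEnd ℂ) (x i) * y i

/-- Spectral norm (ℓ² → ℓ² operator norm) of a complex matrix. -/
def specNorm {m n : Type*} [Fintype m] [Fintype n] (A : Matrix m n ℂ) : ℝ :=
  sSup ((fun x => l2norm (A.mulVec x)) '' {x | l2norm x ≤ 1})

/-- Frobenius norm of a complex matrix. -/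
def frobNorm {m n : Type*} [Fintype m] [Fintype n] (A : Matrix m n ℂ) : ℝ :=
  Real.sqrt (∑ i, ∑ j, ‖A i j‖ ^ 2)

/-- The standard complex Gaussian measure on ℂ: real and imaginary parts are
independent real centered Gaussians of variance 1/2. -/
def stdCGaussian : Measure ℂ :=
  Measure.map (⇑Complex.measurableEquivRealProd.symm)
    ((gaussianReal 0 (1/2)).prod (gaussianReal 0 (1/2)))

/-- A mean-zero complex Gaussian measure of variance σ² on ℂ. -/
def cGaussian (σ : ℝ) : Measure ℂ :=
  Measure.map (fun z : ℂ => (σ : ℂ) * z) stdCGaussian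

/-- Complex Gaussian noise (independent entries, variance σ²). -/
def noiseMeasure (ι : Type*) [Fintype ι] (σ : ℝ) : Measure (ι → ℂ) :=
  Measure.pi (fun _ => cGaussian σ)

/-- The Steinhaus (uniform) distribution on the complex unit circle. -/
def steinhaus : Measure ℂ :=
  Measure.map (fun θ : ℝ => Complex.exp (θ * Complex.I))
    ((ENNReal.ofReal (2 * Real.pi))⁻¹ • volume.restrict (Set.Ico (0:ℝ) (2 * Real.pi)))

/-- A Steinhaus vector: independent entries uniform on the complex unit circle. -/
def steinhausPi (ι : Type*) [Fintype ι] : Measure (ι → ℂ) := Measure.pi (fun _ => steinhaus)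

/-- The joint distribution of the NT independent standard complex Gaussian signals in ℂ^{Nt}. -/
def signalMeasure (NT Nt : ℕ) : Measure (Fin NT → Fin Nt → ℂ) :=
  Measure.pi (fun _ => Measure.pi (fun _ => stdCGaussian))

/-- The angle–delay–Doppler parameter grid `[N_T N_R] × [N_t] × [N_t]`. -/
abbrev Grid (NT NR Nt : ℕ) := Fin (NT * NR) × Fin Nt × Fin Nt

/-- `e^{2πi x}`. -/
def ePhase (x : ℝ) : ℂ := Complex.exp (((2 * Real.pi * x : ℝ) : ℂ) * Complex.I)

/-- The modulated circulant shift `M_f T_τ` applied to a signal: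
`(M_f T_τ s)_k = e^{2πi f (k-1)/N_t} s_{k-τ}` (1-based indices; `k.val = k-1`). -/
def modShift (Nt : ℕ) [NeZero Nt] (τ f : ℕ) (s : Fin Nt → ℂ) (k : Fin Nt) : ℂ :=
  ePhase ((f : ℝ) * (k.1 : ℝ) / (Nt : ℝ)) * s (k - (Fin.ofNat Nt τ))

/-- The column `A_Θ` of the MIMO measurement matrix, `Θ = (β,τ,f)`;
its `j`-th length-`N_t` block is
`e^{2πi β (j-1)/N_R} ∑_i e^{2πi β (i-1)/(N_T N_R)} M_f T_τ s_i`. -/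
def colA (NT NR Nt : ℕ) [NeZero Nt] (sg : Fin NT → Fin Nt → ℂ)
    (Θ : Grid NT NR Nt) (p : Fin NR × Fin Nt) : ℂ :=
  ePhase (((Θ.1.1 : ℝ) + 1) * (p.1.1 : ℝ) / (NR : ℝ)) *
    ∑ i : Fin NT, ePhase (((Θ.1.1 : ℝ) + 1) * (i.1 : ℝ) / ((NT : ℝ) * (NR : ℝ))) *
      modShift Nt (Θ.2.1.1 + 1) (Θ.2.2.1 + 1) (sg i) p.2

/-- The column `Ã_Θ = (N_T N_R N_t)^{-1/2} A_Θ` of the scaled measurement matrix. -/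
def colAt (NT NR Nt : ℕ) [NeZero Nt] (sg : Fin NT → Fin Nt → ℂ)
    (Θ : Grid NT NR Nt) (p : Fin NR × Fin Nt) : ℂ :=
  ((Real.sqrt ((NT : ℝ) * (NR : ℝ) * (Nt : ℝ)) : ℂ))⁻¹ * colA NT NR Nt sg Θ p

/-- The MIMO measurement matrix `A`. -/
def Amat (NT NR Nt : ℕ) [NeZero Nt] (sg : Fin NT → Fin Nt → ℂ) :
    Matrix (Fin NR × Fin Nt) (Grid NT NR Nt) ℂ := fun p Θ => colA NT NR Nt sg Θ p

/-- The scaled MIMO measurement matrix `Ã = (N_T N_R N_t)^{-1/2} A`. -/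
def Atil (NT NR Nt : ℕ) [NeZero Nt] (sg : Fin NT → Fin Nt → ℂ) :
    Matrix (Fin NR × Fin Nt) (Grid NT NR Nt) ℂ := fun p Θ => colAt NT NR Nt sg Θ p

/-- The Gram matrix `Ã_T^* Ã_T` of the columns of `Ã` indexed by a subset `T`. -/
def gram (NT NR Nt : ℕ) [NeZero Nt] (sg : Fin NT → Fin Nt → ℂ)
    (T : Finset (Grid NT NR Nt)) : Matrix {Θ // Θ ∈ T} {Θ // Θ ∈ T} ℂ :=
  fun Θ Θ' => cInner (colAt NT NR Nt sg Θ.1) (colAt NT NR Nt sg Θ'.1)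

/-- `S_{[β]}`: the elements of `S` whose angle parameter is equivalent to `β`
(equivalent ⟺ difference divisible by `N_R`). -/
def classOf (NT NR Nt : ℕ) (S : Finset (Grid NT NR Nt)) (β : Fin (NT * NR)) :
    Finset (Grid NT NR Nt) :=
  S.filter (fun Θ => ((Θ.1.1 : ℤ) - (β.1 : ℤ)) % (NR : ℤ) = 0)

/-- A support set `S` is `η`-balanced if `|S_{[β]}| ≤ η |S| / N_R` for every angle class. -/
def IsBalanced (NT NR Nt : ℕ) (S : Finset (Grid NT NR Nt)) (η : ℝ) : Prop :=
  ∀ β : Fin (NT * NR), ((classOf NT NR Nt S β).card : ℝ) ≤ η * (S.card : ℝ) / (NR : ℝ)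

/-- The restricted isometry constant `δ_s(A)`: the smallest `δ ≥ 0` such that
`(1-δ)‖x‖₂² ≤ ‖Ax‖₂² ≤ (1+δ)‖x‖₂²` for all `s`-sparse `x`. -/
def ripConst {m n : Type*} [Fintype m] [Fintype n] (s : ℕ) (A : Matrix m n ℂ) : ℝ :=
  sInf {δ : ℝ | 0 ≤ δ ∧ ∀ x : n → ℂ, (Function.support x).ncard ≤ s →
    (1 - δ) * l2normSq x ≤ l2normSq (A.mulVec x) ∧
      l2normSq (A.mulVec x) ≤ (1 + δ) * l2normSq x}


/-- The matrix `X_Θ`, whose `(i,j)`-th `N_t × N_t` block is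
`e^{2πi β(i-1)/N_R} e^{2πi β(j-1)/(N_T N_R)} M_f T_τ`. -/
def Xmat (NT NR Nt : ℕ) [NeZero Nt] (Θ : Grid NT NR Nt) :
    Matrix (Fin NR × Fin Nt) (Fin NT × Fin Nt) ℂ :=
  fun p q =>
    ePhase (((Θ.1.1 : ℝ) + 1) * (p.1.1 : ℝ) / (NR : ℝ)) *
    ePhase (((Θ.1.1 : ℝ) + 1) * (q.1.1 : ℝ) / ((NT : ℝ) * (NR : ℝ))) *
    (ePhase (((Θ.2.2.1 : ℝ) + 1) * (p.2.1 : ℝ) / (Nt : ℝ)) *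
      (if q.2 = p.2 - (Fin.ofNat Nt (Θ.2.1.1 + 1 : ℕ)) then 1 else 0))

lemma ePhase_add (x y : ℝ) : ePhase (x + y) = ePhase x * ePhase y := by
  rw [ePhase, ePhase, ePhase, ← Complex.exp_add]
  push_cast
  ring_nf

lemma conj_ePhase_mul_ePhase (x y : ℝ) :
    starRingEnd ℂ (ePhase x) * ePhase y = ePhase (y - x) := by
  rw [sub_eq_neg_add, ePhase_add, ePhase, ePhase, ← Complex.exp_conj]
  congr 2
  simp [map_ofNat]

lemma ePhase_natCast_mul (k : ℕ) (x : ℝ) : ePhase (k * x) = ePhase x ^ k := by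
  rw [ePhase, ePhase, ← Complex.exp_nat_mul]
  push_cast
  ring_nf

lemma ePhase_intCast_div (n : ℕ) (a : ℤ) : ePhase (a / n) = exp (2 * Real.pi * I / n) ^ a := by
  rw [ePhase, ← Complex.exp_int_mul]
  push_cast
  ring_nf

theorem sum_ePhase_intCast_mul_div (n : ℕ) (a : ℤ) :
    ∑ k : Fin n, ePhase (a * k / n) = if (n : ℤ) ∣ a then (n : ℂ) else 0 := by
  rcases eq_or_ne n 0 with rfl | hn
  · simp
  have hζ := Complex.isPrimitiveRoot_exp n hn
  have hpow (k : ℕ) : ePhase (a * k / n) = (exp (2 * Real.pi * I / n) ^ a) ^ k := by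
    rw [← ePhase_intCast_div, ← ePhase_natCast_mul]
    ring_nf
  rw [Fin.sum_univ_eq_sum_range (fun k => ePhase (a * k / n)),
    Finset.sum_congr rfl fun k _ => hpow k]
  split_ifs with hdvd
  · simp [(hζ.zpow_eq_one_iff_dvd a).2 hdvd]
  · have hωn : (exp (2 * Real.pi * I / n) ^ a) ^ n = 1 := by
      rw [← zpow_natCast, ← zpow_mul, mul_comm a, zpow_mul, zpow_natCast, hζ.pow_eq_one,
        one_zpow]
    rw [geom_sum_eq (mt (hζ.zpow_eq_one_iff_dvd a).1 hdvd), hωn, sub_self, zero_div]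

theorem sum_ePhase_sub_mul_div (n : ℕ) (a b : Fin n) :
    ∑ k : Fin n, ePhase (((a : ℝ) - b) * k / n) = if b = a then (n : ℂ) else 0 := by
  have h := sum_ePhase_intCast_mul_div n ((a : ℤ) - b)
  push_cast at h
  rw [h]
  refine if_congr ⟨fun hdvd => Fin.ext ?_, fun hba => by simp [hba]⟩ rfl rfl
  have hlt : |(a : ℤ) - b| < n := by
    rw [abs_lt]; constructor <;> omega
  have := Int.eq_zero_of_abs_lt_dvd hdvd hlt
  omega

open Matrix
open scoped Kronecker

theorem _root_.Fin.ofNat_val_add_one (n : ℕ) [NeZero n] (a : Fin n) :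
    Fin.ofNat n (a + 1) = a + 1 :=
  Fin.ext (by simp [Fin.val_add])

section TraceConjTransposeMul

variable {R l m n p : Type*} [Fintype m] [Fintype n] [Fintype p]

theorem trace_conjTranspose_mul [NonUnitalSemiring R] [StarRing R] (A B : Matrix m n R) :
    trace (Aᴴ * B) = ∑ i, ∑ j, star (A i j) * B i j := by
  simp only [trace, diag, mul_apply, conjTranspose_apply]
  exact Finset.sum_comm

theorem trace_conjTranspose_vecMulVec_mul_vecMulVec [CommSemiring R] [StarRing R]
    (u u' : m → R) (v v' : n → R) :
    trace ((vecMulVec u' v')ᴴ * vecMulVec u v) = (star u' ⬝ᵥ u) * (star v' ⬝ᵥ v) := by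
  rw [conjTranspose_vecMulVec, vecMulVec_mul_vecMulVec, trace_vecMulVec, dotProduct_smul,
    smul_eq_mul, mul_comm]

theorem trace_conjTranspose_kronecker_mul_kronecker [Fintype l] [CommSemiring R] [StarRing R]
    (A A' : Matrix l m R) (B B' : Matrix n p R) :
    trace ((A' ⊗ₖ B')ᴴ * (A ⊗ₖ B)) = trace (A'ᴴ * A) * trace (B'ᴴ * B) := by
  rw [conjTranspose_kronecker, ← mul_kronecker_mul, trace_kronecker]

end TraceConjTransposeMul

def fourierVec (m : ℕ) (b d : ℝ) : Fin m → ℂ := fun k => ePhase (b * k / d)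

lemma star_fourierVec_dotProduct (m : ℕ) (b b' d : ℝ) :
    star (fourierVec m b' d) ⬝ᵥ fourierVec m b d =
      ∑ k : Fin m, ePhase ((b - b') * k / d) := by
  refine Finset.sum_congr rfl fun k _ => ?_
  rw [Pi.star_apply, fourierVec, fourierVec, Complex.star_def, conj_ePhase_mul_ePhase]
  ring_nf

lemma sum_ePhase_mul_div_mul_sum (NT NR : ℕ) (c : ℝ) :
    (∑ i : Fin NR, ePhase (c * i / NR)) * ∑ j : Fin NT, ePhase (c * j / ((NT : ℝ) * NR)) =
      ∑ k : Fin (NT * NR), ePhase (c * k / (NT * NR : ℕ)) := by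
  rcases eq_or_ne NT 0 with rfl | hT
  · simp
  rcases eq_or_ne NR 0 with rfl | hR
  · simp
  rw [Fintype.sum_mul_sum, ← Fintype.sum_prod_type',
    ← (finProdFinEquiv.trans (finCongr (mul_comm NR NT))).sum_comp]
  refine Fintype.sum_congr _ _ fun x => ?_
  rw [← ePhase_add]
  congr 1
  simp only [Equiv.trans_apply, finCongr_apply, Fin.val_cast, finProdFinEquiv_apply_val]
  push_cast
  field_simp
  ring

def steeringMat (NT NR : ℕ) (b : ℝ) : Matrix (Fin NR) (Fin NT) ℂ :=
  vecMulVec (fourierVec NR b NR) (fourierVec NT b (NT * NR))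

lemma trace_conjTranspose_steeringMat_mul (NT NR : ℕ) (b b' : ℝ) :
    trace ((steeringMat NT NR b')ᴴ * steeringMat NT NR b) =
      ∑ k : Fin (NT * NR), ePhase ((b - b') * k / (NT * NR : ℕ)) := by
  rw [steeringMat, steeringMat, trace_conjTranspose_vecMulVec_mul_vecMulVec,
    star_fourierVec_dotProduct, star_fourierVec_dotProduct, sum_ePhase_mul_div_mul_sum]

def modShiftMat (Nt : ℕ) (τ : Fin Nt) (f : ℝ) : Matrix (Fin Nt) (Fin Nt) ℂ :=
  fun k l => ePhase (f * k / Nt) * if l = k - τ then 1 else 0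

lemma trace_conjTranspose_modShiftMat_mul (Nt : ℕ) [NeZero Nt] (τ τ' : Fin Nt) (f f' : ℝ) :
    trace ((modShiftMat Nt τ' f')ᴴ * modShiftMat Nt τ f) =
      if τ' = τ then ∑ k : Fin Nt, ePhase ((f - f') * k / Nt) else 0 := by
  rw [trace_conjTranspose_mul]
  split_ifs with hτ
  · subst hτ
    refine Finset.sum_congr rfl fun k _ => ?_
    simp [modShiftMat, conj_ePhase_mul_ePhase, ← sub_mul, ← sub_div]
  · refine Finset.sum_eq_zero fun k _ => Finset.sum_eq_zero fun l _ => ?_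
    have hne : ¬ (l = k - τ' ∧ l = k - τ) := fun h =>
      hτ (sub_right_injective (h.1.symm.trans h.2))
    simp only [modShiftMat]
    split_ifs <;> simp_all

lemma Xmat_eq_kronecker (NT NR Nt : ℕ) [NeZero Nt] (Θ : Grid NT NR Nt) :
    Xmat NT NR Nt Θ = steeringMat NT NR (Θ.1 + 1) ⊗ₖ
      modShiftMat Nt (Fin.ofNat Nt (Θ.2.1 + 1)) (Θ.2.2 + 1) :=
  rfl

theorem stmt14_general (NT NR Nt : ℕ) [NeZero Nt]
    (Θ Θ' : Grid NT NR Nt) :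
    Matrix.trace ((Xmat NT NR Nt Θ')ᴴ * Xmat NT NR Nt Θ) =
      if Θ' = Θ then ((NT * NR * Nt : ℕ) : ℂ) else 0 := by
  obtain ⟨β, τ, f⟩ := Θ
  obtain ⟨β', τ', f'⟩ := Θ'
  rw [Xmat_eq_kronecker, Xmat_eq_kronecker, trace_conjTranspose_kronecker_mul_kronecker,
    trace_conjTranspose_steeringMat_mul, trace_conjTranspose_modShiftMat_mul,
    Fin.ofNat_val_add_one, Fin.ofNat_val_add_one]
  simp only [add_sub_add_right_eq_sub, sum_ePhase_sub_mul_div, add_left_inj, Prod.mk.injEq]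
  split_ifs <;> simp_all [mul_assoc]

/-- the matrices `(N_T N_R N_t)^{-1/2} X_Θ` form an orthonormal system
w.r.t. the Frobenius inner product (Lemma A.1). -/
theorem stmt14 (NT NR Nt : ℕ) [NeZero NT] [NeZero NR] [NeZero Nt]
    (Θ Θ' : Grid NT NR Nt) :
    Matrix.trace ((Xmat NT NR Nt Θ')ᴴ * Xmat NT NR Nt Θ) =
      if Θ' = Θ then ((NT * NR * Nt : ℕ) : ℂ) else 0 :=
  stmt14_general NT NR Nt Θ Θ'

end MIMO
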